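/- For a forest F consisting of at least two trees with rightmost tree R_F, and any indices i ≤ j, sim(F, T2[i,j)) = max over k with i ≤ k ≤ j of ( sim(F - R_F, T2[i,k)) + sim(R_F, T2[k,j)) ). Equivalently, S(F) = S(F - R_F) ⋆ S(R_F) where ⋆ is the max-plus matrix product. -/

import Mathlib

/-- Ordered rooted trees with node labels from `α`. -/
inductive Tree' (α : Type) : Type
  | node (label : α) (children : List (Tree' α))

/-- An ordered forest is an ordered list of trees. -/
abbrev Forest (α : Type) := List (Tree' α)

mutual
/-- Number of nodes of a tree. -/
def Tree'.size {α : Type} : Tree' α → ℕ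
  | .node _ cs => 1 + Forest.size cs
/-- Number of nodes of a forest. -/
def Forest.size {α : Type} : Forest α → ℕ
  | [] => 0
  | t :: ts => Tree'.size t + Forest.size ts
end

/-- A single edit operation on a forest: delete a node (promoting its children, in
order, to its parent) or relabel a node. -/
inductive EditStep {α : Type} : Forest α → Forest α → Prop
  | delete (pre : Forest α) (a : α) (cs post : Forest α) :
      EditStep (pre ++ Tree'.node a cs :: post) (pre ++ cs ++ post)
  | relabel (pre : Forest α) (a b : α) (cs post : Forest α) :
      EditStep (pre ++ Tree'.node a cs :: post) (pre ++ Tree'.node b cs :: post)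
  | inside (pre : Forest α) (a : α) {cs cs' : Forest α} (post : Forest α) :
      EditStep cs cs' →
      EditStep (pre ++ Tree'.node a cs :: post) (pre ++ Tree'.node a cs' :: post)

/-- `EditSteps n F G`: `G` is obtained from `F` by exactly `n` edit operations. -/
inductive EditSteps {α : Type} : ℕ → Forest α → Forest α → Prop
  | refl (F : Forest α) : EditSteps 0 F F
  | tail {n : ℕ} {F G H : Forest α} : EditSteps n F G → EditStep G H → EditSteps (n + 1) F H

/-- The (unweighted) tree edit distance: the minimum total number of relabelings
and deletions applied to `F1` and `F2` so that they become identical. -/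
noncomputable def ed {α : Type} (F1 F2 : Forest α) : ℕ :=
  sInf {k | ∃ (k1 k2 : ℕ) (G : Forest α), k = k1 + k2 ∧ EditSteps k1 F1 G ∧ EditSteps k2 F2 G}

/-- The similarity between two forests. -/
noncomputable def sim {α : Type} (F1 F2 : Forest α) : ℤ :=
  (Forest.size F1 : ℤ) + Forest.size F2 - ed F1 F2

mutual
/-- Helper for the subforest operation: the part of tree `t`, whose bi-order
traversal interval starts at position `p`, surviving the restriction to positions `[l, r)`.
A node is kept iff both of its occurrences lie at positions `l, …, r - 1`;
removed nodes have their children promoted. -/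
def cutT {α : Type} (l r p : ℕ) : Tree' α → Forest α
  | .node a cs =>
      if l ≤ p ∧ p + 2 * Tree'.size (Tree'.node a cs) ≤ r then [Tree'.node a cs]
      else cutF l r (p + 1) cs
/-- The part of forest `F`, whose bi-order traversal starts at position `p`,
surviving the restriction to positions `[l, r)`. -/
def cutF {α : Type} (l r p : ℕ) : Forest α → Forest α
  | [] => []
  | t :: ts => cutT l r p t ++ cutF l r (p + 2 * Tree'.size t) ts
end

/-- The subforest `F[l, r)` determined by the interval `[l, r)` of the (1-indexed)
bi-order traversal sequence of `F`. -/
def subforest {α : Type} (F : Forest α) (l r : ℕ) : Forest α := cutF l r 1 F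

/-- `OccF F base p t`: the forest `F`, whose bi-order traversal starts at position `base`,
has a node with subtree `t` whose first occurrence is at position `p`. -/
inductive OccF {α : Type} : Forest α → ℕ → ℕ → Tree' α → Prop
  | head (a : α) (cs ts : Forest α) (base : ℕ) :
      OccF (Tree'.node a cs :: ts) base base (Tree'.node a cs)
  | inChildren {cs : Forest α} {p : ℕ} {t : Tree' α} (a : α) (ts : Forest α) (base : ℕ) :
      OccF cs (base + 1) p t → OccF (Tree'.node a cs :: ts) base p t
  | inRest {ts : Forest α} {p : ℕ} {t : Tree' α} (t0 : Tree' α) (base : ℕ) :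
      OccF ts (base + 2 * Tree'.size t0) p t → OccF (t0 :: ts) base p t

/-- The label of the root of a tree. -/
def Tree'.label {α : Type} : Tree' α → α
  | .node a _ => a

/-- A node occurrence `(p, t)` (first occurrence at position `p`, subtree `t`) is a strict
ancestor of the occurrence `(q, s)`. -/
def Anc {α : Type} (u v : ℕ × Tree' α) : Prop :=
  u.1 < v.1 ∧ v.1 + 2 * Tree'.size v.2 ≤ u.1 + 2 * Tree'.size u.2

/-- The node occurrence `u` precedes the node occurrence `v`: `r(u) ≤ l(v)`. -/
def Prec {α : Type} (u v : ℕ × Tree' α) : Prop :=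
  u.1 + 2 * Tree'.size u.2 ≤ v.1

/-!
For `i ≤ k ≤ j`, deleting the nodes of `T2[i,j)` whose traversal interval straddles `k` turns
`T2[i,j)` into `T2[i,k) ++ T2[k,j)`; since `ed` is subadditive under concatenation, every `k`
gives `sim ts T2[i,k) + sim [t] T2[k,j) ≤ sim (ts ++ [t]) T2[i,j)`.

Conversely, take optimal scripts `ts ++ [t] → G ← T2[i,j)`; the left one splits as `ts → G₁`,
`[t] → G₂` with `G = G₁ ++ G₂`. A script of deletions and relabelings on `T2[i,j)` is recorded
by a marking of the nodes of `T2`, and it costs at least `|T2[i,j)|` minus the number `P` of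
nodes the marking keeps with their own label. Cutting the marking at the traversal position `k`
where `G₁` ends gives markings inside `T2[i,k)` and `T2[k,j)` that produce `G₁` and `G₂` and
together keep `P` labels; they are reached from `T2[i,k)` and `T2[k,j)` at total cost
`|T2[i,k)| + |T2[k,j)| - P`, which is the reverse inequality for this `k`.
-/

variable {α : Type}

theorem Forest.size_append (F G : Forest α) :
    Forest.size (F ++ G) = Forest.size F + Forest.size G := by
  induction F with
  | nil => simp [Forest.size]
  | cons t ts ih => simp [Forest.size, ih, Nat.add_assoc]

namespace EditStep

theorem append_left (P : Forest α) {X X' : Forest α} : EditStep X X' → EditStep (P ++ X) (P ++ X')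
  | .delete pre a cs post => by simpa using delete (P ++ pre) a cs post
  | .relabel pre a b cs post => by simpa using relabel (P ++ pre) a b cs post
  | .inside pre a post h => by simpa using inside (P ++ pre) a post h

theorem append_right (Q : Forest α) {X X' : Forest α} : EditStep X X' → EditStep (X ++ Q) (X' ++ Q)
  | .delete pre a cs post => by simpa using delete pre a cs (post ++ Q)
  | .relabel pre a b cs post => by simpa using relabel pre a b cs (post ++ Q)
  | .inside pre a post h => by simpa using inside pre a (post ++ Q) h

theorem node (a : α) {cs cs' : Forest α} (h : EditStep cs cs') :
    EditStep [.node a cs] [.node a cs'] := by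
  simpa using inside [] a [] h

theorem delete_root (a : α) (cs : Forest α) : EditStep [.node a cs] cs := by
  simpa using delete [] a cs []

theorem relabel_root (a b : α) (cs : Forest α) : EditStep [.node a cs] [.node b cs] := by
  simpa using relabel [] a b cs []

theorem exists_singleton {S G : Forest α} : EditStep S G →
    ∃ pre u post v, S = pre ++ u :: post ∧ G = pre ++ v ++ post ∧ EditStep [u] v
  | .delete pre a cs post => ⟨pre, _, post, cs, rfl, rfl, delete_root a cs⟩
  | .relabel pre a b cs post => ⟨pre, _, post, _, rfl, by simp, relabel_root a b cs⟩
  | .inside pre a post h => ⟨pre, _, post, _, rfl, by simp, h.node a⟩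

theorem not_nil {G : Forest α} (h : EditStep [] G) : False := by
  obtain ⟨pre, u, post, v, hS, -⟩ := h.exists_singleton
  simp at hS

theorem of_append {X Y G : Forest α} (h : EditStep (X ++ Y) G) :
    (∃ X', EditStep X X' ∧ G = X' ++ Y) ∨ ∃ Y', EditStep Y Y' ∧ G = X ++ Y' := by
  obtain ⟨pre, u, post, v, hS, rfl, huv⟩ := h.exists_singleton
  rcases List.append_eq_append_iff.mp hS with ⟨w, rfl, rfl⟩ | ⟨w, rfl, hw⟩
  · exact Or.inr ⟨w ++ v ++ post, by simpa using (huv.append_right post).append_left w, by simp⟩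
  · rcases List.cons_eq_append_iff.mp hw with ⟨rfl, rfl⟩ | ⟨w', rfl, rfl⟩
    · exact Or.inr ⟨v ++ post, by simpa using huv.append_right post, by simp⟩
    · exact Or.inl ⟨pre ++ v ++ w', by simpa using (huv.append_right w').append_left pre, by simp⟩

theorem of_singleton_node {b : α} {cs G : Forest α} (h : EditStep [.node b cs] G) :
    G = cs ∨ (∃ b', G = [.node b' cs]) ∨ ∃ cs', EditStep cs cs' ∧ G = [.node b cs'] := by
  generalize hS : [Tree'.node b cs] = S at h
  cases h with
  | delete pre a cs post | relabel pre a _ cs post | inside pre a post =>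
    simp only [eq_comm (a := [_]), List.append_eq_singleton_iff, List.cons_eq_cons,
      List.cons_ne_nil, and_false, or_false, Tree'.node.injEq] at hS
    obtain ⟨rfl, ⟨rfl, rfl⟩, rfl⟩ := hS
    simp_all

end EditStep

namespace EditSteps

theorem trans {m n : ℕ} {F G H : Forest α} (h₁ : EditSteps m F G) (h₂ : EditSteps n G H) :
    EditSteps (m + n) F H := by
  induction h₂ with
  | refl => exact h₁
  | tail _ s ih => exact (ih h₁).tail s

theorem cons {n : ℕ} {F G H : Forest α} (s : EditStep F G) (h : EditSteps n G H) :
    EditSteps (n + 1) F H := by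
  simpa [Nat.add_comm] using ((refl F).tail s).trans h

theorem append_left {n : ℕ} {X X' : Forest α} (P : Forest α) (h : EditSteps n X X') :
    EditSteps n (P ++ X) (P ++ X') := by
  induction h with
  | refl => exact refl _
  | tail _ s ih => exact ih.tail (s.append_left P)

theorem append_right {n : ℕ} {X X' : Forest α} (Q : Forest α) (h : EditSteps n X X') :
    EditSteps n (X ++ Q) (X' ++ Q) := by
  induction h with
  | refl => exact refl _
  | tail _ s ih => exact ih.tail (s.append_right Q)

theorem append {m n : ℕ} {X X' Y Y' : Forest α} (h₁ : EditSteps m X X') (h₂ : EditSteps n Y Y') :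
    EditSteps (m + n) (X ++ Y) (X' ++ Y') :=
  (h₁.append_right Y).trans (h₂.append_left X')

theorem node {n : ℕ} {cs cs' : Forest α} (a : α) (h : EditSteps n cs cs') :
    EditSteps n [.node a cs] [.node a cs'] := by
  induction h with
  | refl => exact refl _
  | tail _ s ih => exact ih.tail (s.node a)

theorem of_append {n : ℕ} {X Y G : Forest α} (h : EditSteps n (X ++ Y) G) :
    ∃ n₁ n₂ G₁ G₂, n = n₁ + n₂ ∧ G = G₁ ++ G₂ ∧ EditSteps n₁ X G₁ ∧ EditSteps n₂ Y G₂ := by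
  generalize hS : X ++ Y = S at h
  induction h with
  | refl => exact ⟨0, 0, X, Y, rfl, hS.symm, refl X, refl Y⟩
  | tail _ s ih =>
    obtain ⟨n₁, n₂, G₁, G₂, rfl, rfl, h₁, h₂⟩ := ih hS
    rcases s.of_append with ⟨G₁', s₁, rfl⟩ | ⟨G₂', s₂, rfl⟩
    · exact ⟨n₁ + 1, n₂, G₁', G₂, by omega, rfl, h₁.tail s₁, h₂⟩
    · exact ⟨n₁, n₂ + 1, G₁, G₂', by omega, rfl, h₁, h₂.tail s₂⟩

end EditSteps

mutual
/-- A marking of a tree records the outcome of a script of deletions and relabelings applied to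
it: every node is either dropped or kept with a (possibly new) label. -/
inductive MTree : Tree' α → Type
  | drop {a : α} {cs : Forest α} (m : MForest cs) : MTree (.node a cs)
  | keep {a : α} {cs : Forest α} (b : α) (m : MForest cs) : MTree (.node a cs)
inductive MForest : Forest α → Type
  | nil : MForest []
  | cons {t : Tree' α} {ts : Forest α} (mt : MTree t) (mts : MForest ts) : MForest (t :: ts)
end

namespace MForest

mutual
def _root_.MTree.restrict : {t : Tree' α} → MTree t → Forest α
  | _, .drop m => m.restrict
  | _, .keep b m => [.node b m.restrict]
def restrict : {F : Forest α} → MForest F → Forest α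
  | _, .nil => []
  | _, .cons mt mts => mt.restrict ++ mts.restrict
end

mutual
def _root_.MTree.preserved [DecidableEq α] : {t : Tree' α} → MTree t → ℕ
  | _, .drop m => m.preserved
  | .node a _, .keep b m => (if b = a then 1 else 0) + m.preserved
def preserved [DecidableEq α] : {F : Forest α} → MForest F → ℕ
  | _, .nil => 0
  | _, .cons mt mts => mt.preserved + mts.preserved
end

mutual
def _root_.MTree.Sub : {t : Tree' α} → MTree t → MTree t → Prop
  | _, .drop m, .drop m' => m.Sub m'
  | _, .drop m, .keep _ m' => m.Sub m'
  | _, .keep _ m, .keep _ m' => m.Sub m'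
  | _, .keep _ _, .drop _ => False
def Sub : {F : Forest α} → MForest F → MForest F → Prop
  | _, .nil, .nil => True
  | _, .cons mt mts, .cons mt' mts' => mt.Sub mt' ∧ mts.Sub mts'
end

mutual
def _root_.MTree.full : (t : Tree' α) → MTree t
  | .node a cs => .keep a (full cs)
def full : (F : Forest α) → MForest F
  | [] => .nil
  | t :: ts => .cons (MTree.full t) (full ts)
end

mutual
def _root_.MTree.empty : (t : Tree' α) → MTree t
  | .node _ cs => .drop (empty cs)
def empty : (F : Forest α) → MForest F
  | [] => .nil
  | t :: ts => .cons (MTree.empty t) (empty ts)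
end

mutual
def _root_.MTree.cut (l r p : ℕ) : (t : Tree' α) → MTree t
  | .node a cs =>
    if l ≤ p ∧ p + 2 * Tree'.size (.node a cs) ≤ r then .keep a (full cs)
    else .drop (cut l r (p + 1) cs)
def cut (l r p : ℕ) : (F : Forest α) → MForest F
  | [] => .nil
  | t :: ts => .cons (MTree.cut l r p t) (cut l r (p + 2 * Tree'.size t) ts)
end

mutual
@[simp] theorem _root_.MTree.restrict_full : ∀ t : Tree' α, (MTree.full t).restrict = [t]
  | .node a cs => by simp [MTree.full, MTree.restrict, restrict_full cs]
@[simp] theorem restrict_full : ∀ F : Forest α, (full F).restrict = F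
  | [] => rfl
  | t :: ts => by simp [full, restrict, MTree.restrict_full t, restrict_full ts]
end

mutual
@[simp] theorem _root_.MTree.restrict_empty : ∀ t : Tree' α, (MTree.empty t).restrict = []
  | .node _ cs => restrict_empty cs
@[simp] theorem restrict_empty : ∀ F : Forest α, (empty F).restrict = []
  | [] => rfl
  | t :: ts => by simp [empty, restrict, MTree.restrict_empty t, restrict_empty ts]
end

mutual
theorem _root_.MTree.Sub.refl : ∀ {t : Tree' α} (mt : MTree t), mt.Sub mt
  | _, .drop m => Sub.refl m
  | _, .keep _ m => Sub.refl m
theorem Sub.refl : ∀ {F : Forest α} (M : MForest F), M.Sub M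
  | _, .nil => trivial
  | _, .cons mt mts => ⟨MTree.Sub.refl mt, Sub.refl mts⟩
end

mutual
theorem _root_.MTree.Sub.trans : ∀ {t : Tree' α} {mt₁ mt₂ mt₃ : MTree t},
    mt₁.Sub mt₂ → mt₂.Sub mt₃ → mt₁.Sub mt₃
  | _, .drop m₁, .drop m₂, .drop m₃, h₁, h₂
  | _, .drop m₁, .drop m₂, .keep _ m₃, h₁, h₂
  | _, .drop m₁, .keep _ m₂, .keep _ m₃, h₁, h₂
  | _, .keep _ m₁, .keep _ m₂, .keep _ m₃, h₁, h₂ =>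
    Sub.trans (M₁ := m₁) (M₂ := m₂) (M₃ := m₃) h₁ h₂
  | _, .keep _ _, .drop _, _, h, _ => h.elim
  | _, _, .keep _ _, .drop _, _, h => h.elim
theorem Sub.trans : ∀ {F : Forest α} {M₁ M₂ M₃ : MForest F}, M₁.Sub M₂ → M₂.Sub M₃ → M₁.Sub M₃
  | _, .nil, .nil, .nil, _, _ => trivial
  | _, .cons _ _, .cons _ _, .cons _ _, h₁, h₂ => ⟨MTree.Sub.trans h₁.1 h₂.1, Sub.trans h₁.2 h₂.2⟩
end

mutual
theorem _root_.MTree.sub_full : ∀ {t : Tree' α} (mt : MTree t), mt.Sub (MTree.full t)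
  | _, .drop m => sub_full m
  | _, .keep _ m => sub_full m
theorem sub_full : ∀ {F : Forest α} (M : MForest F), M.Sub (full F)
  | _, .nil => trivial
  | _, .cons mt mts => ⟨MTree.sub_full mt, sub_full mts⟩
end

mutual
theorem _root_.MTree.empty_sub : ∀ {t : Tree' α} (mt : MTree t), (MTree.empty t).Sub mt
  | _, .drop m => empty_sub m
  | _, .keep _ m => empty_sub m
theorem empty_sub : ∀ {F : Forest α} (M : MForest F), (empty F).Sub M
  | _, .nil => trivial
  | _, .cons mt mts => ⟨MTree.empty_sub mt, empty_sub mts⟩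
end

theorem _root_.MTree.cut_eq_full {l r p : ℕ} {t : Tree' α} (hl : l ≤ p)
    (hr : p + 2 * Tree'.size t ≤ r) : MTree.cut l r p t = MTree.full t := by
  obtain ⟨a, cs⟩ := t
  rw [MTree.cut, if_pos ⟨hl, hr⟩, MTree.full]

theorem cut_eq_full {l r : ℕ} : ∀ {p : ℕ} {F : Forest α}, l ≤ p → p + 2 * Forest.size F ≤ r →
    cut l r p F = full F
  | _, [], _, _ => rfl
  | p, t :: ts, hl, hr => by
    simp only [Forest.size] at hr
    rw [cut, full, MTree.cut_eq_full hl (by omega), cut_eq_full (by omega) (by omega)]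

mutual
theorem _root_.MTree.restrict_cut (l r : ℕ) :
    ∀ (p : ℕ) (t : Tree' α), (MTree.cut l r p t).restrict = cutT l r p t
  | p, .node a cs => by
    rw [MTree.cut, cutT]
    split_ifs
    · simp [MTree.restrict]
    · exact restrict_cut l r (p + 1) cs
theorem restrict_cut (l r : ℕ) : ∀ (p : ℕ) (F : Forest α), (cut l r p F).restrict = cutF l r p F
  | _, [] => rfl
  | p, t :: ts => by rw [cut, cutF, restrict, MTree.restrict_cut, restrict_cut]
end

theorem _root_.cutF_eq_self {l r p : ℕ} {F : Forest α} (hl : l ≤ p)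
    (hr : p + 2 * Forest.size F ≤ r) : cutF l r p F = F := by
  rw [← restrict_cut, cut_eq_full hl hr, restrict_full]

theorem _root_.MTree.drop_sub_cut_iff {l r p : ℕ} {a : α} {cs : Forest α} {m : MForest cs} :
    (MTree.drop (a := a) m).Sub (MTree.cut l r p (.node a cs)) ↔ m.Sub (cut l r (p + 1) cs) := by
  rw [MTree.cut]
  split_ifs with h
  · simp only [Tree'.size] at h
    rw [cut_eq_full (by omega) (by omega)]
    exact iff_of_true (sub_full m) (sub_full m)
  · rfl

theorem _root_.MTree.keep_sub_cut_iff {l r p : ℕ} {a b : α} {cs : Forest α} {m : MForest cs} :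
    (MTree.keep (a := a) b m).Sub (MTree.cut l r p (.node a cs)) ↔
      l ≤ p ∧ p + 2 * Tree'.size (.node a cs) ≤ r := by
  rw [MTree.cut]
  split_ifs with h
  · exact iff_of_true (sub_full m) h
  · exact iff_of_false id h

theorem _root_.MTree.sub_cut_of_le {l r p : ℕ} {t : Tree' α} (mt : MTree t) (hl : l ≤ p)
    (hr : p + 2 * Tree'.size t ≤ r) : mt.Sub (MTree.cut l r p t) :=
  MTree.cut_eq_full hl hr ▸ mt.sub_full

theorem sub_cut_of_le {l r p : ℕ} {F : Forest α} (M : MForest F) (hl : l ≤ p)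
    (hr : p + 2 * Forest.size F ≤ r) : M.Sub (cut l r p F) :=
  cut_eq_full hl hr ▸ M.sub_full

mutual
theorem _root_.MTree.Sub.cut_mono {a b c d l r : ℕ} : ∀ {p : ℕ} {t : Tree' α} {mt : MTree t},
    mt.Sub (MTree.cut a b p t) → mt.Sub (MTree.cut c d p t) → l ≤ max a c → min b d ≤ r →
      mt.Sub (MTree.cut l r p t)
  | _, .node _ _, .drop _, h₁, h₂, hl, hr => MTree.drop_sub_cut_iff.mpr
      (Sub.cut_mono (MTree.drop_sub_cut_iff.mp h₁) (MTree.drop_sub_cut_iff.mp h₂) hl hr)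
  | _, .node _ _, .keep _ _, h₁, h₂, hl, hr => by
    have := MTree.keep_sub_cut_iff.mp h₁
    have := MTree.keep_sub_cut_iff.mp h₂
    exact MTree.keep_sub_cut_iff.mpr (by omega)
theorem Sub.cut_mono {a b c d l r : ℕ} : ∀ {p : ℕ} {F : Forest α} {M : MForest F},
    M.Sub (cut a b p F) → M.Sub (cut c d p F) → l ≤ max a c → min b d ≤ r →
      M.Sub (cut l r p F)
  | _, [], .nil, _, _, _, _ => trivial
  | _, _ :: _, .cons _ _, h₁, h₂, hl, hr =>
    ⟨MTree.Sub.cut_mono h₁.1 h₂.1 hl hr, Sub.cut_mono h₁.2 h₂.2 hl hr⟩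
end

section

variable [DecidableEq α]

mutual
@[simp] theorem _root_.MTree.preserved_full : ∀ t : Tree' α, (MTree.full t).preserved = Tree'.size t
  | .node a cs => by simp [MTree.full, MTree.preserved, Tree'.size, preserved_full cs]
@[simp] theorem preserved_full : ∀ F : Forest α, (full F).preserved = Forest.size F
  | [] => rfl
  | t :: ts => by simp [full, preserved, Forest.size, MTree.preserved_full t, preserved_full ts]
end

mutual
@[simp] theorem _root_.MTree.preserved_empty : ∀ t : Tree' α, (MTree.empty t).preserved = 0
  | .node _ cs => preserved_empty cs
@[simp] theorem preserved_empty : ∀ F : Forest α, (empty F).preserved = 0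
  | [] => rfl
  | t :: ts => by simp [empty, preserved, MTree.preserved_empty t, preserved_empty ts]
end

mutual
theorem _root_.MTree.preserved_cut (l r : ℕ) :
    ∀ (p : ℕ) (t : Tree' α), (MTree.cut l r p t).preserved = Forest.size (cutT l r p t)
  | p, .node a cs => by
    rw [MTree.cut, cutT]
    split_ifs
    · simp [MTree.preserved, Forest.size, Tree'.size]
    · exact preserved_cut l r (p + 1) cs
theorem preserved_cut (l r : ℕ) :
    ∀ (p : ℕ) (F : Forest α), (cut l r p F).preserved = Forest.size (cutF l r p F)
  | _, [] => rfl
  | p, t :: ts => by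
    rw [cut, cutF, preserved, Forest.size_append, MTree.preserved_cut, preserved_cut]
end

mutual
theorem _root_.MTree.exists_editSteps_of_sub_cut (l r : ℕ) : ∀ (p : ℕ) {t : Tree' α} (mt : MTree t),
    mt.Sub (MTree.cut l r p t) →
      ∃ n, EditSteps n (cutT l r p t) mt.restrict ∧ n + mt.preserved = Forest.size (cutT l r p t)
  | p, .node a cs, .drop m, h => by
    obtain ⟨n, hn, hsize⟩ := exists_editSteps_of_sub_cut l r (p + 1) m (MTree.drop_sub_cut_iff.mp h)
    rw [cutT]
    split_ifs with hc
    · simp only [Tree'.size] at hc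
      rw [cutF_eq_self (by omega) (by omega)] at hn hsize
      exact ⟨n + 1, EditSteps.cons (EditStep.delete_root a cs) hn, by
        simp only [MTree.preserved, Forest.size, Tree'.size]; omega⟩
    · exact ⟨n, hn, hsize⟩
  | p, .node a cs, .keep b m, h => by
    have hc := MTree.keep_sub_cut_iff.mp h
    simp only [Tree'.size] at hc
    obtain ⟨n, hn, hsize⟩ :=
      exists_editSteps_of_sub_cut l r (p + 1) m (m.sub_cut_of_le (by omega) (by omega))
    rw [cutF_eq_self (by omega) (by omega)] at hn hsize
    rw [cutT, if_pos (by simpa only [Tree'.size] using hc)]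
    by_cases hb : b = a
    · subst hb
      exact ⟨n, hn.node b, by
        simp only [MTree.preserved, ↓reduceIte, Forest.size, Tree'.size]; omega⟩
    · exact ⟨n + 1, (hn.node a).tail (EditStep.relabel_root a b _), by
        simp only [MTree.preserved, hb, ↓reduceIte, Forest.size, Tree'.size]; omega⟩
theorem exists_editSteps_of_sub_cut (l r : ℕ) : ∀ (p : ℕ) {F : Forest α} (M : MForest F),
    M.Sub (cut l r p F) →
      ∃ n, EditSteps n (cutF l r p F) M.restrict ∧ n + M.preserved = Forest.size (cutF l r p F)
  | _, _, .nil, _ => ⟨0, .refl _, rfl⟩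
  | p, t :: _, .cons mt mts, h => by
    obtain ⟨n₁, h₁, e₁⟩ := MTree.exists_editSteps_of_sub_cut l r p mt h.1
    obtain ⟨n₂, h₂, e₂⟩ := exists_editSteps_of_sub_cut l r (p + 2 * Tree'.size t) mts h.2
    exact ⟨n₁ + n₂, h₁.append h₂, by simp only [preserved, cutF, Forest.size_append]; omega⟩
end

mutual
theorem _root_.MTree.exists_sub_of_editStep : ∀ {t : Tree' α} (mt : MTree t) {G : Forest α},
    EditStep mt.restrict G →
      ∃ mt' : MTree t, mt'.Sub mt ∧ mt'.restrict = G ∧ mt.preserved ≤ mt'.preserved + 1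
  | _, .drop m, _, h => by
    obtain ⟨m', hsub, hres, hp⟩ := exists_sub_of_editStep m h
    exact ⟨.drop m', hsub, hres, hp⟩
  | _, .keep b m, _, h => by
    rcases EditStep.of_singleton_node h with rfl | ⟨b', rfl⟩ | ⟨cs', h', rfl⟩
    · refine ⟨.drop m, Sub.refl m, rfl, ?_⟩
      simp only [MTree.preserved]; split_ifs <;> omega
    · refine ⟨.keep b' m, Sub.refl m, rfl, ?_⟩
      simp only [MTree.preserved]; split_ifs <;> omega
    · obtain ⟨m', hsub, rfl, hp⟩ := exists_sub_of_editStep m h'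
      exact ⟨.keep b m', hsub, rfl, by simp only [MTree.preserved]; omega⟩
theorem exists_sub_of_editStep : ∀ {F : Forest α} (M : MForest F) {G : Forest α},
    EditStep M.restrict G →
      ∃ M' : MForest F, M'.Sub M ∧ M'.restrict = G ∧ M.preserved ≤ M'.preserved + 1
  | _, .nil, _, h => (EditStep.not_nil h).elim
  | _, .cons mt mts, _, h => by
    rcases EditStep.of_append h with ⟨X, hX, rfl⟩ | ⟨Y, hY, rfl⟩
    · obtain ⟨mt', hsub, rfl, hp⟩ := mt.exists_sub_of_editStep hX
      exact ⟨.cons mt' mts, ⟨hsub, Sub.refl mts⟩, rfl, by simp only [preserved]; omega⟩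
    · obtain ⟨mts', hsub, rfl, hp⟩ := exists_sub_of_editStep mts hY
      exact ⟨.cons mt mts', ⟨MTree.Sub.refl mt, hsub⟩, rfl, by simp only [preserved]; omega⟩
end

theorem exists_sub_of_editSteps {F : Forest α} (M : MForest F) {n : ℕ} {G : Forest α}
    (h : EditSteps n M.restrict G) :
    ∃ M' : MForest F, M'.Sub M ∧ M'.restrict = G ∧ M.preserved ≤ M'.preserved + n := by
  generalize hS : M.restrict = S at h
  induction h with
  | refl => exact ⟨M, Sub.refl M, hS, by omega⟩
  | tail _ s ih =>
    obtain ⟨M₁, hsub₁, rfl, hp₁⟩ := ih hS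
    obtain ⟨M₂, hsub₂, rfl, hp₂⟩ := M₁.exists_sub_of_editStep s
    exact ⟨M₂, hsub₂.trans hsub₁, rfl, by omega⟩

mutual
theorem _root_.MTree.exists_split : ∀ (p : ℕ) {t : Tree' α} (mt : MTree t) {G₁ G₂ : Forest α},
    mt.restrict = G₁ ++ G₂ → ∃ k, p ≤ k ∧ k ≤ p + 2 * Tree'.size t ∧ ∃ mt₁ mt₂ : MTree t,
      mt₁.restrict = G₁ ∧ mt₂.restrict = G₂ ∧ mt₁.Sub mt ∧ mt₂.Sub mt ∧
      mt.preserved = mt₁.preserved + mt₂.preserved ∧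
      mt₁.Sub (MTree.cut p k p t) ∧ mt₂.Sub (MTree.cut k (p + 2 * Tree'.size t) p t)
  | p, .node a cs, .drop m, _, _, h => by
    obtain ⟨k, hpk, hkp, m₁, m₂, rfl, rfl, s₁, s₂, hp, c₁, c₂⟩ := exists_split (p + 1) m h
    simp only [Tree'.size] at hkp ⊢
    refine ⟨k, by omega, by omega, .drop m₁, .drop m₂, rfl, rfl, s₁, s₂, hp, ?_, ?_⟩
    · exact MTree.drop_sub_cut_iff.mpr (c₁.cut_mono c₁ (by omega) (by omega))
    · exact MTree.drop_sub_cut_iff.mpr (c₂.cut_mono c₂ (by omega) (by omega))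
  | p, .node a cs, .keep b m, G₁, G₂, h => by
    have : G₁ = [] ∨ G₂ = [] := by
      rcases List.append_eq_singleton_iff.mp h.symm with ⟨h₁, -⟩ | ⟨-, h₂⟩
      exacts [Or.inl h₁, Or.inr h₂]
    rcases this with rfl | rfl
    · exact ⟨p, le_rfl, by omega, MTree.empty _, .keep b m, by simp, by simpa using h,
        MTree.empty_sub _, MTree.Sub.refl _, by simp, MTree.empty_sub _,
        MTree.sub_cut_of_le _ le_rfl le_rfl⟩
    · exact ⟨_, by omega, le_rfl, .keep b m, MTree.empty _, by simpa using h, by simp,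
        MTree.Sub.refl _, MTree.empty_sub _, by simp, MTree.sub_cut_of_le _ le_rfl le_rfl,
        MTree.empty_sub _⟩
theorem exists_split : ∀ (p : ℕ) {F : Forest α} (M : MForest F) {G₁ G₂ : Forest α},
    M.restrict = G₁ ++ G₂ → ∃ k, p ≤ k ∧ k ≤ p + 2 * Forest.size F ∧ ∃ M₁ M₂ : MForest F,
      M₁.restrict = G₁ ∧ M₂.restrict = G₂ ∧ M₁.Sub M ∧ M₂.Sub M ∧
      M.preserved = M₁.preserved + M₂.preserved ∧
      M₁.Sub (cut p k p F) ∧ M₂.Sub (cut k (p + 2 * Forest.size F) p F)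
  | p, _, .nil, _, _, h => by
    obtain ⟨rfl, rfl⟩ := List.append_eq_nil_iff.mp h.symm
    exact ⟨p, le_rfl, by omega, .nil, .nil, rfl, rfl, trivial, trivial, rfl, trivial, trivial⟩
  | p, t :: ts, .cons mt mts, _, _, h => by
    rcases List.append_eq_append_iff.mp h with ⟨w, rfl, hw⟩ | ⟨w, hw, rfl⟩
    · obtain ⟨k, hpk, hkp, m₁, m₂, rfl, rfl, s₁, s₂, hp, c₁, c₂⟩ :=
        exists_split (p + 2 * Tree'.size t) mts hw
      simp only [Forest.size] at hkp ⊢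
      refine ⟨k, by omega, by omega, .cons mt m₁, .cons (MTree.empty t) m₂, rfl,
        by simp [restrict], ⟨MTree.Sub.refl mt, s₁⟩, ⟨MTree.empty_sub mt, s₂⟩,
        by simp only [preserved, hp, MTree.preserved_empty]; omega,
        ⟨mt.sub_cut_of_le le_rfl hpk, c₁.cut_mono c₁ (by omega) (by omega)⟩,
        ⟨MTree.empty_sub _, c₂.cut_mono c₂ (by omega) (by omega)⟩⟩
    · obtain ⟨k, hpk, hkp, mt₁, mt₂, rfl, rfl, s₁, s₂, hp, c₁, c₂⟩ := MTree.exists_split p mt hw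
      simp only [Forest.size] at hkp ⊢
      refine ⟨k, hpk, by omega, .cons mt₁ (empty ts), .cons mt₂ mts, by simp [restrict], rfl,
        ⟨s₁, empty_sub mts⟩, ⟨s₂, Sub.refl mts⟩,
        by simp only [preserved, hp, preserved_empty]; omega, ⟨c₁, empty_sub _⟩,
        ⟨c₂.cut_mono c₂ (by omega) (by omega), mts.sub_cut_of_le (by omega) (by omega)⟩⟩
end

end

end MForest

mutual
theorem cutT_eq_nil {l r : ℕ} : ∀ (p : ℕ) (t : Tree' α),
    r ≤ p ∨ p + 2 * Tree'.size t ≤ l → cutT l r p t = []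
  | p, .node a cs, h => by
    simp only [Tree'.size] at h
    rw [cutT, if_neg (by simp only [Tree'.size]; omega)]
    exact cutF_eq_nil (p + 1) cs (by omega)
theorem cutF_eq_nil {l r : ℕ} : ∀ (p : ℕ) (F : Forest α),
    r ≤ p ∨ p + 2 * Forest.size F ≤ l → cutF l r p F = []
  | _, [], _ => rfl
  | p, t :: ts, h => by
    simp only [Forest.size] at h
    rw [cutF, cutT_eq_nil p t (by omega), cutF_eq_nil _ ts (by omega)]
    rfl
end

mutual
theorem cutT_split {i k j : ℕ} (hik : i ≤ k) (hkj : k ≤ j) : ∀ (p : ℕ) (t : Tree' α),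
    ∃ d, EditSteps d (cutT i j p t) (cutT i k p t ++ cutT k j p t) ∧
      Forest.size (cutT i j p t) = d + Forest.size (cutT i k p t) + Forest.size (cutT k j p t)
  | p, .node a cs => by
    obtain ⟨d, hd, hsize⟩ := cutF_split hik hkj (p + 1) cs
    have hs : Tree'.size (.node a cs) = 1 + Forest.size cs := rfl
    simp only [cutT]
    by_cases hij : i ≤ p ∧ p + 2 * Tree'.size (.node a cs) ≤ j
    · rw [if_pos hij]
      rw [cutF_eq_self (by omega) (by omega)] at hd hsize
      by_cases hk : p + 2 * Tree'.size (.node a cs) ≤ k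
      · rw [if_pos ⟨hij.1, hk⟩, if_neg (by omega), cutF_eq_nil (p + 1) cs (by omega)]
        exact ⟨0, by simpa using EditSteps.refl _, by simp [Forest.size]⟩
      by_cases hk' : k ≤ p
      · rw [if_neg (by omega), if_pos ⟨hk', hij.2⟩, cutF_eq_nil (p + 1) cs (by omega)]
        exact ⟨0, by simpa using EditSteps.refl _, by simp [Forest.size]⟩
      rw [if_neg (by omega), if_neg (by omega)]
      exact ⟨d + 1, EditSteps.cons (EditStep.delete_root a cs) hd, by
        simp only [Forest.size]; omega⟩
    · rw [if_neg hij, if_neg (by omega), if_neg (by omega)]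
      exact ⟨d, hd, hsize⟩
theorem cutF_split {i k j : ℕ} (hik : i ≤ k) (hkj : k ≤ j) : ∀ (p : ℕ) (F : Forest α),
    ∃ d, EditSteps d (cutF i j p F) (cutF i k p F ++ cutF k j p F) ∧
      Forest.size (cutF i j p F) = d + Forest.size (cutF i k p F) + Forest.size (cutF k j p F)
  | _, [] => ⟨0, .refl _, rfl⟩
  | p, t :: ts => by
    obtain ⟨d₁, h₁, e₁⟩ := cutT_split hik hkj p t
    obtain ⟨d₂, h₂, e₂⟩ := cutF_split hik hkj (p + 2 * Tree'.size t) ts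
    refine ⟨d₁ + d₂, ?_, by simp only [cutF, Forest.size_append]; omega⟩
    simp only [cutF]
    -- one of the two middle pieces is empty, so the concatenation can be regrouped
    rcases le_or_gt k (p + 2 * Tree'.size t) with hk | hk
    · rw [cutF_eq_nil (l := i) _ ts (Or.inl hk)] at h₂ ⊢
      simpa using h₁.append h₂
    · rw [cutT_eq_nil (r := j) p t (Or.inr hk.le)] at h₁ ⊢
      simpa using h₁.append h₂
end

theorem ed_le {F H G : Forest α} {k₁ k₂ : ℕ} (h₁ : EditSteps k₁ F G) (h₂ : EditSteps k₂ H G) :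
    ed F H ≤ k₁ + k₂ :=
  Nat.sInf_le ⟨k₁, k₂, G, rfl, h₁, h₂⟩

theorem exists_editSteps_ed (F H : Forest α) :
    ∃ k₁ k₂ G, ed F H = k₁ + k₂ ∧ EditSteps k₁ F G ∧ EditSteps k₂ H G := by
  classical
  have h_nil (F : Forest α) : ∃ n, EditSteps n F [] := by
    obtain ⟨n, hn, -⟩ := (MForest.empty F).exists_editSteps_of_sub_cut 0 (2 * Forest.size F) 0
      (MForest.empty_sub _)
    rw [cutF_eq_self le_rfl (by omega), MForest.restrict_empty] at hn
    exact ⟨n, hn⟩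
  obtain ⟨n₁, h₁⟩ := h_nil F
  obtain ⟨n₂, h₂⟩ := h_nil H
  exact Nat.sInf_mem (s := {k | ∃ (k₁ k₂ : ℕ) (G : Forest α), k = k₁ + k₂ ∧ EditSteps k₁ F G ∧
    EditSteps k₂ H G}) ⟨_, n₁, n₂, [], rfl, h₁, h₂⟩

theorem ed_le_ed_add {F H H' : Forest α} {d : ℕ} (h : EditSteps d H H') :
    ed F H ≤ ed F H' + d := by
  obtain ⟨k₁, k₂, G, he, h₁, h₂⟩ := exists_editSteps_ed F H'
  have := ed_le h₁ (h.trans h₂)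
  omega

theorem ed_append_le (F₁ F₂ H₁ H₂ : Forest α) : ed (F₁ ++ F₂) (H₁ ++ H₂) ≤ ed F₁ H₁ + ed F₂ H₂ := by
  obtain ⟨a₁, b₁, G₁, e₁, h₁, h₁'⟩ := exists_editSteps_ed F₁ H₁
  obtain ⟨a₂, b₂, G₂, e₂, h₂, h₂'⟩ := exists_editSteps_ed F₂ H₂
  have := ed_le (h₁.append h₂) (h₁'.append h₂')
  omega

theorem sim_add_sim_le (T F₁ F₂ : Forest α) {i k j : ℕ} (hik : i ≤ k) (hkj : k ≤ j) :
    sim F₁ (subforest T i k) + sim F₂ (subforest T k j) ≤ sim (F₁ ++ F₂) (subforest T i j) := by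
  obtain ⟨d, hd, hsize⟩ := cutF_split hik hkj 1 T
  have h₁ := ed_le_ed_add (F := F₁ ++ F₂) hd
  have h₂ := ed_append_le F₁ F₂ (subforest T i k) (subforest T k j)
  have := Forest.size_append F₁ F₂
  simp only [sim, subforest] at *
  omega

theorem exists_sim_le_sim_add [DecidableEq α] (T F₁ F₂ : Forest α) {i j : ℕ} (hij : i ≤ j) :
    ∃ k, i ≤ k ∧ k ≤ j ∧
      sim (F₁ ++ F₂) (subforest T i j) ≤ sim F₁ (subforest T i k) + sim F₂ (subforest T k j) := by
  obtain ⟨x, y, G, hed, hx, hy⟩ := exists_editSteps_ed (F₁ ++ F₂) (subforest T i j)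
  obtain ⟨x₁, x₂, G₁, G₂, rfl, rfl, hx₁, hx₂⟩ := hx.of_append
  rw [subforest, ← MForest.restrict_cut] at hy
  obtain ⟨M, hM, hres, hpres⟩ := (MForest.cut i j 1 T).exists_sub_of_editSteps hy
  obtain ⟨k₀, -, -, M₁, M₂, rfl, rfl, s₁, s₂, hP, c₁, c₂⟩ := MForest.exists_split 1 M hres
  -- `M` keeps only nodes inside `[i, j)`, so clamping the split point into `[i, j]` is harmless
  set k := max i (min k₀ j)
  have hM₁ := (s₁.trans hM).cut_mono c₁ (l := i) (r := k) (by omega) (by omega)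
  have hM₂ := (s₂.trans hM).cut_mono c₂ (l := k) (r := j) (by omega) (by omega)
  obtain ⟨n₁, hn₁, e₁⟩ := M₁.exists_editSteps_of_sub_cut i k 1 hM₁
  obtain ⟨n₂, hn₂, e₂⟩ := M₂.exists_editSteps_of_sub_cut k j 1 hM₂
  have h₁ := ed_le hx₁ hn₁
  have h₂ := ed_le hx₂ hn₂
  have := MForest.preserved_cut i j 1 T
  have := Forest.size_append F₁ F₂
  refine ⟨k, by omega, by omega, ?_⟩
  simp only [sim, subforest] at *
  omega

/-- For a forest with at least two trees and rightmost tree `t`,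
`sim(F, T2[i,j)) = max_{i ≤ k ≤ j} ( sim(F - R_F, T2[i,k)) + sim(R_F, T2[k,j)) )`;
this is the max-plus product identity `S(F) = S(F - R_F) ⋆ S(R_F)`. -/
theorem sim_maxplus_decomposition {α : Type} (T2 : Forest α) (ts : Forest α) (t : Tree' α)
    (hts : ts ≠ []) (i j : ℕ) (hi : 1 ≤ i) (hij : i ≤ j)
    (hj : j ≤ 2 * Forest.size T2 + 1) :
    IsGreatest {x : ℤ | ∃ k, i ≤ k ∧ k ≤ j ∧
        x = sim ts (subforest T2 i k) + sim [t] (subforest T2 k j)}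
      (sim (ts ++ [t]) (subforest T2 i j)) := by
  classical
  refine ⟨?_, fun _ ⟨k, hik, hkj, hx⟩ => hx ▸ sim_add_sim_le T2 ts [t] hik hkj⟩
  obtain ⟨k, hik, hkj, hle⟩ := exists_sim_le_sim_add T2 ts [t] hij
  exact ⟨k, hik, hkj, le_antisymm hle (sim_add_sim_le T2 ts [t] hik hkj)⟩
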